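/- Let n ≥ 4 and let G be any simple graph on n vertices, with m edges and degree function d. Then rcr(G) ≤ (rcr(K_n) / (3·C(n,4))) · ( C(m,2) − Σ_{v∈V(G)} C(d(v),2) ), where rcr denotes the rectilinear crossing number. -/

import Mathlib

/-- A rectilinear drawing: an injective map of the vertices into the plane
with no three vertex images collinear. -/
def IsRectilinearDrawing {V : Type*} (f : V → ℝ × ℝ) : Prop :=
  Function.Injective f ∧
    ∀ a b c : V, a ≠ b → a ≠ c → b ≠ c →
      ¬ Collinear ℝ ({f a, f b, f c} : Set (ℝ × ℝ))

/-- The open straight-line segment joining the images of the endpoints of an edge. -/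
def edgeSeg {V : Type*} (f : V → ℝ × ℝ) : Sym2 V → Set (ℝ × ℝ) :=
  Sym2.lift ⟨fun a b => openSegment ℝ (f a) (f b), fun a b => openSegment_symm ℝ (f a) (f b)⟩

/-- Two edges (with disjoint vertex sets) cross if their open segments meet. -/
def EdgesCross {V : Type*} (f : V → ℝ × ℝ) (e₁ e₂ : Sym2 V) : Prop :=
  (∀ v, v ∈ e₁ → v ∉ e₂) ∧ (edgeSeg f e₁ ∩ edgeSeg f e₂).Nonempty

lemma edgesCross_symm {V : Type*} (f : V → ℝ × ℝ) : Symmetric (EdgesCross f) :=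
  fun _ _ h => ⟨fun v hv hv' => h.1 v hv' hv, by rw [Set.inter_comm]; exact h.2⟩

/-- The crossing number of a drawing: the number of unordered pairs of edges of `G`
that cross in the drawing. -/
noncomputable def crossingNumber {V : Type*} (G : SimpleGraph V) (f : V → ℝ × ℝ) : ℕ :=
  Set.ncard {p : Sym2 (Sym2 V) |
    (∀ e ∈ p, e ∈ G.edgeSet) ∧ p ∈ Sym2.fromRel (r := EdgesCross f) ⟨fun _ _ h => edgesCross_symm f h⟩}

/-- The rectilinear crossing number of a graph. -/
noncomputable def rcr {V : Type*} (G : SimpleGraph V) : ℕ :=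
  sInf {k | ∃ f : V → ℝ × ℝ, IsRectilinearDrawing f ∧ crossingNumber G f = k}

/-- The complete balanced `r`-partite graph with `r` parts of size `m`. -/
def completeBalanced (r m : ℕ) : SimpleGraph (Fin r × Fin m) :=
  SimpleGraph.comap Prod.fst ⊤

instance (r m : ℕ) : DecidableRel (completeBalanced r m).Adj :=
  fun u v => inferInstanceAs (Decidable (u.1 ≠ v.1))

/-- The balanced layered graph with `r` layers of size `m`: all edges between
consecutive layers. -/
def layeredGraph (r m : ℕ) : SimpleGraph (Fin r × Fin m) where
  Adj u v := u.1.1 + 1 = v.1.1 ∨ v.1.1 + 1 = u.1.1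
  symm := ⟨fun _ _ h => h.symm⟩
  loopless := ⟨fun u h => by cases h <;> omega⟩

instance (r m : ℕ) : DecidableRel (layeredGraph r m).Adj :=
  fun u v => inferInstanceAs (Decidable (u.1.1 + 1 = v.1.1 ∨ v.1.1 + 1 = u.1.1))

/-- The `s`-fold blow-up of a graph `G`. -/
def blowup {V : Type*} (G : SimpleGraph V) (s : ℕ) : SimpleGraph (V × Fin s) :=
  SimpleGraph.comap Prod.fst G

/-!
Fix an optimal rectilinear drawing `f` of `K_n` and relabel its vertices by a permutation `σ`;
then `f ∘ σ` is a rectilinear drawing of `G`. A pair of vertex-disjoint edges of `G` crosses in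
`f ∘ σ` exactly when its image under `σ` crosses in `f`, and the permutations act transitively
on the vertex-disjoint pairs of edges of `K_n`. Hence every vertex-disjoint pair of edges crosses
for the same number of permutations, and averaging over `σ` shows that some `f ∘ σ` has at most
`rcr(K_n) · D(G) / D(K_n)` crossings, where `D` counts vertex-disjoint pairs of edges.
Two distinct edges that are not disjoint share exactly one vertex, so
`D(G) = C(m,2) − Σ_v C(d(v),2)`, and for `K_n` this gives `D(K_n) = 3·C(n,4)`.
-/

open Finset

theorem Nat.choose_two_choose_two (n : ℕ) :
    (n.choose 2).choose 2 = n * (n - 1).choose 2 + 3 * n.choose 4 := by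
  have key : ((n.choose 2).choose 2 : ℚ) = n * ((n - 1 : ℕ).choose 2 : ℚ) + 3 * n.choose 4 := by
    rcases n with _ | n
    · simp
    simp only [Nat.cast_choose_two, Nat.cast_choose_eq_descPochhammer_div ℚ _ 4,
      Nat.add_sub_cancel]
    simp [descPochhammer_succ_right, Nat.factorial]
    ring
  exact_mod_cast key

lemma Finset.card_sym2_filter_not_isDiag {α : Type*} [DecidableEq α] (s : Finset α) :
    #{z ∈ s.sym2 | ¬z.IsDiag} = (#s).choose 2 := by
  rw [sym2_eq_image, Sym2.filter_image_mk_not_isDiag, Sym2.card_image_offDiag]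

section Drawing

variable {V W : Type*}

lemma not_collinear_parabola {a b c : ℝ} (hab : a ≠ b) (hac : a ≠ c) (hbc : b ≠ c) :
    ¬ Collinear ℝ ({(a, a ^ 2), (b, b ^ 2), (c, c ^ 2)} : Set (ℝ × ℝ)) := by
  rw [collinear_iff_of_mem (Set.mem_insert _ _)]
  rintro ⟨v, hv⟩
  obtain ⟨s, hs⟩ := hv (b, b ^ 2) (by simp)
  obtain ⟨t, ht⟩ := hv (c, c ^ 2) (by simp)
  simp only [Prod.ext_iff, vadd_eq_add, Prod.fst_add, Prod.snd_add, Prod.smul_fst, Prod.smul_snd,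
    smul_eq_mul] at hs ht
  have : (b - a) * (c - a) * (c - b) = 0 := by
    linear_combination (t * v.2) * hs.1 - (c - a) * hs.2 - (s * v.2) * ht.1 + (b - a) * ht.2
  simp [sub_eq_zero, hab.symm, hac.symm, hbc.symm] at this

lemma exists_isRectilinearDrawing [Countable V] : ∃ f : V → ℝ × ℝ, IsRectilinearDrawing f := by
  obtain ⟨x, hx⟩ := Countable.exists_injective_nat V
  have hx' : Function.Injective fun v => (x v : ℝ) := Nat.cast_injective.comp hx
  refine ⟨fun v => ((x v : ℝ), (x v : ℝ) ^ 2), fun a b h => hx' congr(($h).1), ?_⟩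
  intro a b c hab hac hbc
  exact not_collinear_parabola (hx'.ne hab) (hx'.ne hac) (hx'.ne hbc)

lemma IsRectilinearDrawing.comp {f : V → ℝ × ℝ} (hf : IsRectilinearDrawing f) {g : W → V}
    (hg : Function.Injective g) : IsRectilinearDrawing (f ∘ g) :=
  ⟨hf.1.comp hg, fun _ _ _ hab hac hbc => hf.2 _ _ _ (hg.ne hab) (hg.ne hac) (hg.ne hbc)⟩

instance (f : V → ℝ × ℝ) : Std.Symm (EdgesCross f) := ⟨fun _ _ h => edgesCross_symm f h⟩

lemma edgesCross_comp_iff (f : V → ℝ × ℝ) {g : W → V} (hg : Function.Injective g)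
    {e₁ e₂ : Sym2 W} : EdgesCross (f ∘ g) e₁ e₂ ↔ EdgesCross f (e₁.map g) (e₂.map g) := by
  induction e₁ using Sym2.ind
  induction e₂ using Sym2.ind
  simp [EdgesCross, edgeSeg, hg.eq_iff]

lemma rcr_le_crossingNumber (G : SimpleGraph V) {f : V → ℝ × ℝ} (hf : IsRectilinearDrawing f) :
    rcr G ≤ crossingNumber G f :=
  Nat.sInf_le ⟨f, hf, rfl⟩

lemma exists_crossingNumber_eq_rcr [Countable V] (G : SimpleGraph V) :
    ∃ f : V → ℝ × ℝ, IsRectilinearDrawing f ∧ crossingNumber G f = rcr G := by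
  obtain ⟨f, hf⟩ := exists_isRectilinearDrawing (V := V)
  have hne : {k | ∃ f : V → ℝ × ℝ, IsRectilinearDrawing f ∧ crossingNumber G f = k}.Nonempty :=
    ⟨_, f, hf, rfl⟩
  exact Nat.sInf_mem hne

end Drawing

def EdgesDisjoint {V : Type*} (e₁ e₂ : Sym2 V) : Prop := ∀ v ∈ e₁, v ∉ e₂

instance {V : Type*} : Std.Symm (EdgesDisjoint (V := V)) := ⟨fun _ _ h v hv hv' => h v hv' hv⟩

lemma EdgesDisjoint.ne {V : Type*} {e₁ e₂ : Sym2 V} (h : EdgesDisjoint e₁ e₂) : e₁ ≠ e₂ := by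
  rintro rfl
  exact h _ e₁.out_fst_mem e₁.out_fst_mem

namespace SimpleGraph

variable {V W : Type*}

lemma crossingNumber_comp_iso {G : SimpleGraph V} {H : SimpleGraph W} (φ : G ≃g H)
    (f : W → ℝ × ℝ) : crossingNumber G (f ∘ φ) = crossingNumber H f := by
  have hsurj : Function.Surjective (Sym2.map (Sym2.map φ)) := fun q =>
    ⟨q.map (Sym2.map φ.symm), by simp [Sym2.map_map]⟩
  rw [crossingNumber, crossingNumber, ← Set.ncard_preimage_of_injective_subset_range
    (Sym2.map.injective (Sym2.map.injective φ.injective)) (by simp [hsurj.range_eq])]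
  congr 1
  ext p
  induction p using Sym2.ind with
  | _ e₁ e₂ =>
  simp [φ.map_mem_edgeSet_iff, edgesCross_comp_iff f φ.injective]

section EdgePairs

variable [Fintype V]

open Classical in
noncomputable def edgePairs (G : SimpleGraph V) (r : Sym2 V → Sym2 V → Prop) [Std.Symm r] :
    Finset (Sym2 (Sym2 V)) :=
  {p | (∀ e ∈ p, e ∈ G.edgeSet) ∧ p ∈ Sym2.fromRel (inferInstance : Std.Symm r)}

variable {G H : SimpleGraph V} {r r' : Sym2 V → Sym2 V → Prop} [Std.Symm r] [Std.Symm r']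

lemma mem_edgePairs {p : Sym2 (Sym2 V)} :
    p ∈ G.edgePairs r ↔
      (∀ e ∈ p, e ∈ G.edgeSet) ∧ p ∈ Sym2.fromRel (inferInstance : Std.Symm r) := by
  simp [edgePairs]

lemma edgePairs_mono (hGH : G ≤ H) (hr : r ≤ r') : G.edgePairs r ⊆ H.edgePairs r' := by
  intro p hp
  rw [mem_edgePairs] at hp ⊢
  exact ⟨fun e he => edgeSet_mono hGH (hp.1 e he), Sym2.fromRel_mono _ _ hr hp.2⟩

lemma crossingNumber_eq_card_edgePairs (G : SimpleGraph V) (f : V → ℝ × ℝ) :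
    crossingNumber G f = #(G.edgePairs (EdgesCross f)) := by
  rw [crossingNumber, ← Set.ncard_coe_finset]
  congr 1
  ext p
  simp only [Set.mem_ofPred_eq, mem_coe, mem_edgePairs]

end EdgePairs

section DisjointPairs

open scoped Classical

variable [Fintype V] [DecidableEq V] (G : SimpleGraph V) [DecidableRel G.Adj]

lemma edgePairs_edgesDisjoint_eq_filter :
    G.edgePairs EdgesDisjoint = {p ∈ G.edgeFinset.sym2 |
      ¬p.IsDiag ∧ p ∈ Sym2.fromRel (inferInstance : Std.Symm EdgesDisjoint)} := by
  ext p
  induction p using Sym2.ind with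
  | _ e₁ e₂ =>
  simp only [mem_edgePairs, mem_filter, mem_sym2_iff, mem_edgeFinset, Sym2.mk_isDiag_iff,
    Sym2.fromRel_prop]
  exact ⟨fun h => ⟨h.1, h.2.ne, h.2⟩, fun h => ⟨h.1, h.2.2⟩⟩

lemma filter_not_edgesDisjoint_eq_biUnion :
    {p ∈ G.edgeFinset.sym2 |
      ¬p.IsDiag ∧ p ∉ Sym2.fromRel (inferInstance : Std.Symm EdgesDisjoint)} =
      univ.biUnion fun v => {p ∈ (G.incidenceFinset v).sym2 | ¬p.IsDiag} := by
  ext p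
  induction p using Sym2.ind with
  | _ e₁ e₂ =>
  simp only [mem_filter, mem_sym2_iff, mem_edgeFinset, Sym2.mk_isDiag_iff, Sym2.fromRel_prop,
    EdgesDisjoint, mem_biUnion, mem_univ, true_and, mem_incidenceFinset, incidenceSet,
    Set.mem_ofPred_eq, Sym2.mem_iff]
  aesop

lemma pairwiseDisjoint_incidenceFinset_sym2 :
    ((univ : Finset V) : Set V).PairwiseDisjoint
      fun v => {p ∈ (G.incidenceFinset v).sym2 | ¬p.IsDiag} := by
  intro v _ w _ hvw
  rw [Function.onFun, Finset.disjoint_left]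
  intro p hpv hpw
  induction p using Sym2.ind with
  | _ e₁ e₂ =>
  simp only [mem_filter, mk_mem_sym2_iff, mem_incidenceFinset, Sym2.mk_isDiag_iff] at hpv hpw
  obtain ⟨⟨⟨-, hv₁⟩, -, hv₂⟩, hne⟩ := hpv
  obtain ⟨⟨⟨-, hw₁⟩, -, hw₂⟩, -⟩ := hpw
  exact hne (((Sym2.mem_and_mem_iff hvw).1 ⟨hv₁, hw₁⟩).trans
    ((Sym2.mem_and_mem_iff hvw).1 ⟨hv₂, hw₂⟩).symm)

theorem card_edgePairs_edgesDisjoint_add_sum_choose_degree :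
    #(G.edgePairs EdgesDisjoint) + ∑ v, (G.degree v).choose 2 = (#G.edgeFinset).choose 2 := by
  have hsplit := card_filter_add_card_filter_not (s := {p ∈ G.edgeFinset.sym2 | ¬p.IsDiag})
    (· ∈ Sym2.fromRel (inferInstance : Std.Symm EdgesDisjoint))
  rw [filter_filter, filter_filter, ← edgePairs_edgesDisjoint_eq_filter,
    filter_not_edgesDisjoint_eq_biUnion, card_biUnion (pairwiseDisjoint_incidenceFinset_sym2 G)]
    at hsplit
  simpa [Finset.card_sym2_filter_not_isDiag, card_incidenceFinset_eq_degree] using hsplit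

lemma card_edgePairs_top_edgesDisjoint :
    #((⊤ : SimpleGraph V).edgePairs EdgesDisjoint) = 3 * (Fintype.card V).choose 4 := by
  have h := card_edgePairs_edgesDisjoint_add_sum_choose_degree (⊤ : SimpleGraph V)
  simp only [← completeGraph_eq_top, complete_graph_degree, sum_const, card_univ, smul_eq_mul,
    card_edgeFinset_top_eq_card_choose_two, Nat.choose_two_choose_two] at h
  rw [← completeGraph_eq_top]
  omega

end DisjointPairs

section Relabel

open scoped Classical

variable [Fintype V]

lemma edgePairs_edgesCross_comp (G : SimpleGraph V) (f : V → ℝ × ℝ) (σ : Equiv.Perm V) :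
    G.edgePairs (EdgesCross (f ∘ σ)) =
      {p ∈ G.edgePairs EdgesDisjoint |
        p.map (Sym2.map σ) ∈ Sym2.fromRel (inferInstance : Std.Symm (EdgesCross f))} := by
  ext p
  induction p using Sym2.ind with
  | _ e₁ e₂ =>
  simp only [mem_filter, mem_edgePairs, Sym2.map_mk, Sym2.fromRel_prop,
    ← edgesCross_comp_iff f σ.injective]
  exact ⟨fun h => ⟨⟨h.1, h.2.1⟩, h.2⟩, fun h => ⟨h.1.1, h.2⟩⟩

lemma sum_crossingNumber_comp_perm [DecidableEq V] (G : SimpleGraph V) (f : V → ℝ × ℝ) :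
    ∑ σ : Equiv.Perm V, crossingNumber G (f ∘ σ) =
      ∑ p ∈ G.edgePairs EdgesDisjoint, #{σ : Equiv.Perm V |
        p.map (Sym2.map σ) ∈ Sym2.fromRel (inferInstance : Std.Symm (EdgesCross f))} := by
  simp_rw [crossingNumber_eq_card_edgePairs, edgePairs_edgesCross_comp, card_filter]
  exact sum_comm

lemma exists_injective_of_mem_edgePairs_top {p : Sym2 (Sym2 V)}
    (hp : p ∈ (⊤ : SimpleGraph V).edgePairs EdgesDisjoint) :
    ∃ x : Fin 4 → V, Function.Injective x ∧ s(s(x 0, x 1), s(x 2, x 3)) = p := by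
  induction p using Sym2.ind with
  | _ e₁ e₂ =>
  induction e₁ using Sym2.ind with
  | _ a b =>
  induction e₂ using Sym2.ind with
  | _ c d =>
  simp only [mem_edgePairs, Sym2.fromRel_prop, EdgesDisjoint, edgeSet_top, Sym2.mem_iff] at hp
  refine ⟨![a, b, c, d], ?_, rfl⟩
  intro i j hij
  fin_cases i <;> fin_cases j <;> simp_all

lemma exists_perm_map_eq {p q : Sym2 (Sym2 V)}
    (hp : p ∈ (⊤ : SimpleGraph V).edgePairs EdgesDisjoint)
    (hq : q ∈ (⊤ : SimpleGraph V).edgePairs EdgesDisjoint) :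
    ∃ σ : Equiv.Perm V, p.map (Sym2.map σ) = q := by
  obtain ⟨x, hx, rfl⟩ := exists_injective_of_mem_edgePairs_top hp
  obtain ⟨y, hy, rfl⟩ := exists_injective_of_mem_edgePairs_top hq
  obtain ⟨σ, hσ⟩ := Equiv.Perm.exists_extending_pair x y hx hy
  exact ⟨σ, by simp [hσ]⟩

lemma card_filter_perm_map_mem_eq [DecidableEq V] (S : Set (Sym2 (Sym2 V)))
    [DecidablePred (· ∈ S)] {p q : Sym2 (Sym2 V)}
    (hp : p ∈ (⊤ : SimpleGraph V).edgePairs EdgesDisjoint)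
    (hq : q ∈ (⊤ : SimpleGraph V).edgePairs EdgesDisjoint) :
    #{σ : Equiv.Perm V | p.map (Sym2.map σ) ∈ S} =
      #{σ : Equiv.Perm V | q.map (Sym2.map σ) ∈ S} := by
  obtain ⟨τ, rfl⟩ := exists_perm_map_eq hp hq
  refine card_nbij' (· * τ⁻¹) (· * τ) ?_ ?_ ?_ ?_ <;> intro σ hσ <;> simp_all [Sym2.map_map]

theorem card_mul_sum_crossingNumber_comp_perm [DecidableEq V] (G : SimpleGraph V)
    (f : V → ℝ × ℝ) :
    #((⊤ : SimpleGraph V).edgePairs EdgesDisjoint) *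
        ∑ σ : Equiv.Perm V, crossingNumber G (f ∘ σ) =
      #(G.edgePairs EdgesDisjoint) * ∑ σ : Equiv.Perm V, crossingNumber ⊤ (f ∘ σ) := by
  rw [sum_crossingNumber_comp_perm, sum_crossingNumber_comp_perm, mul_sum]
  refine sum_const_nat fun p hp => ?_
  exact (sum_const_nat fun q hq =>
    card_filter_perm_map_mem_eq _ hq (edgePairs_mono le_top le_rfl hp)).symm

end Relabel

theorem rcr_mul_card_edgePairs_top_le [Fintype V] [DecidableEq V] (G : SimpleGraph V) :
    rcr G * #((⊤ : SimpleGraph V).edgePairs EdgesDisjoint) ≤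
      rcr (⊤ : SimpleGraph V) * #(G.edgePairs EdgesDisjoint) := by
  obtain ⟨f, hf, hopt⟩ := exists_crossingNumber_eq_rcr (⊤ : SimpleGraph V)
  set N := Fintype.card (Equiv.Perm V)
  have hG : N * rcr G ≤ ∑ σ : Equiv.Perm V, crossingNumber G (f ∘ σ) := by
    simpa using card_nsmul_le_sum univ _ _ fun σ _ => rcr_le_crossingNumber G (hf.comp σ.injective)
  have hinv (σ : Equiv.Perm V) : crossingNumber ⊤ (f ∘ σ) = crossingNumber ⊤ f :=
    crossingNumber_comp_iso (Iso.completeGraph σ) f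
  have htop : ∑ σ : Equiv.Perm V, crossingNumber ⊤ (f ∘ σ) = N * rcr (⊤ : SimpleGraph V) := by
    simp [hinv, hopt, N]
  refine Nat.le_of_mul_le_mul_left ?_ (Fintype.card_pos (α := Equiv.Perm V))
  calc N * (rcr G * #((⊤ : SimpleGraph V).edgePairs EdgesDisjoint))
      = #((⊤ : SimpleGraph V).edgePairs EdgesDisjoint) * (N * rcr G) := by ring
    _ ≤ #((⊤ : SimpleGraph V).edgePairs EdgesDisjoint) *
          ∑ σ : Equiv.Perm V, crossingNumber G (f ∘ σ) := Nat.mul_le_mul_left _ hG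
    _ = #(G.edgePairs EdgesDisjoint) * ∑ σ : Equiv.Perm V, crossingNumber ⊤ (f ∘ σ) :=
          card_mul_sum_crossingNumber_comp_perm G f
    _ = N * (rcr (⊤ : SimpleGraph V) * #(G.edgePairs EdgesDisjoint)) := by rw [htop]; ring

end SimpleGraph

open SimpleGraph in
theorem stmt6_general {V : Type*} [Fintype V] (n : ℕ) (hn : 4 ≤ n)
    (hV : Fintype.card V = n) (G : SimpleGraph V) [DecidableRel G.Adj] :
    (rcr G : ℝ) ≤ (rcr (⊤ : SimpleGraph V) : ℝ) / (3 * (n.choose 4 : ℝ)) *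
      ((G.edgeFinset.card.choose 2 : ℝ) - ∑ v : V, ((G.degree v).choose 2 : ℝ)) := by
  classical
  have hG : (#(G.edgePairs EdgesDisjoint) : ℝ) =
      (#G.edgeFinset).choose 2 - ∑ v, ((G.degree v).choose 2 : ℝ) := by
    rw [eq_sub_iff_add_eq]
    exact_mod_cast G.card_edgePairs_edgesDisjoint_add_sum_choose_degree
  have htop : (#((⊤ : SimpleGraph V).edgePairs EdgesDisjoint) : ℝ) = 3 * n.choose 4 := by
    rw [← hV]
    exact_mod_cast card_edgePairs_top_edgesDisjoint
  have hpos : (0 : ℝ) < 3 * n.choose 4 := by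
    have := Nat.choose_pos hn
    positivity
  rw [← hG, ← htop, div_mul_eq_mul_div, le_div_iff₀ (htop ▸ hpos)]
  exact_mod_cast rcr_mul_card_edgePairs_top_le G

/-- for any simple graph `G` on `n ≥ 4` vertices,
`rcr(G) ≤ rcr(K_n)/(3·C(n,4)) · (C(m,2) − Σ_v C(d(v),2))`. -/
theorem stmt6 {V : Type*} [Fintype V] [DecidableEq V] (n : ℕ) (hn : 4 ≤ n)
    (hV : Fintype.card V = n) (G : SimpleGraph V) [DecidableRel G.Adj] :
    (rcr G : ℝ) ≤ (rcr (⊤ : SimpleGraph V) : ℝ) / (3 * (n.choose 4 : ℝ)) *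
      ((G.edgeFinset.card.choose 2 : ℝ) - ∑ v : V, ((G.degree v).choose 2 : ℝ)) :=
  stmt6_general n hn hV G
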